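/- Let S ∈ I_n and j ∈ {1,…,n} with j ∈ S. Then: (1) j ∉ φ(S) and j ∉ φ^{-1}(S); (2) if j ≥ 2 then j−1 ∉ φ(S), and if j ≤ n−1 then j+1 ∉ φ^{-1}(S). -/

import Mathlib

/-- An independent set of the path graph `P_n` (vertices `1,…,n`, edges `{i,i+1}`):
a subset of `{1,…,n}` containing no two adjacent vertices. -/
def IndepSet (n : ℕ) (S : Finset ℕ) : Prop :=
  S ⊆ Finset.Icc 1 n ∧ ∀ i ∈ S, i + 1 ∉ S

instance (n : ℕ) (S : Finset ℕ) : Decidable (IndepSet n S) := by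
  unfold IndepSet; infer_instance

/-- The toggle `τ_i` acting on independent sets of the path graph `P_n`. -/
def toggle (n i : ℕ) (S : Finset ℕ) : Finset ℕ :=
  if i ∈ S then S.erase i
  else if IndepSet n (insert i S) then insert i S
  else S

/-- `φ = τ_n ∘ ⋯ ∘ τ_2 ∘ τ_1` (toggle at each vertex from left to right). -/
def phi (n : ℕ) (S : Finset ℕ) : Finset ℕ :=
  (List.range n).foldl (fun T k => toggle n (k + 1) T) S

/-- `φ⁻¹ = τ_1 ∘ τ_2 ∘ ⋯ ∘ τ_n` (toggle at each vertex from right to left). -/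
def phiInv (n : ℕ) (S : Finset ℕ) : Finset ℕ :=
  (List.range n).foldr (fun k T => toggle n (k + 1) T) S

/-! Toggling at `i` changes nothing but membership of `i`, and it leaves `i` out whenever `i` or one
of its neighbours is present beforehand. In `φ` (vertices in increasing order) vertex `j` is toggled
while `j` is still present and `j - 1` while `j` is still present, and neither is toggled again; in
`φ⁻¹` (decreasing order) the same holds for `j` and `j + 1`. -/

lemma mem_toggle_of_ne {n i m : ℕ} {T : Finset ℕ} (h : m ≠ i) : m ∈ toggle n i T ↔ m ∈ T := by
  unfold toggle
  split_ifs <;> simp [h]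

lemma notMem_toggle_of_mem {n i k : ℕ} {T : Finset ℕ} (hk : k ∈ T)
    (hki : k = i ∨ k = i + 1 ∨ k + 1 = i) : i ∉ toggle n i T := by
  unfold toggle
  split_ifs with hi hind
  · exact T.notMem_erase i
  · rcases hki with rfl | rfl | rfl
    · exact absurd hk hi
    · exact absurd (Finset.mem_insert_of_mem hk) (hind.2 i (T.mem_insert_self i))
    · exact absurd (T.mem_insert_self _) (hind.2 k (Finset.mem_insert_of_mem hk))
  · exact hi

def sweep (n : ℕ) (l : List ℕ) (S : Finset ℕ) : Finset ℕ :=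
  l.foldl (fun T i => toggle n i T) S

lemma mem_sweep_of_notMem {n m : ℕ} {l : List ℕ} (h : m ∉ l) (T : Finset ℕ) :
    m ∈ sweep n l T ↔ m ∈ T := by
  induction l generalizing T with
  | nil => rfl
  | cons i l ih =>
    rw [List.mem_cons, not_or] at h
    exact (ih h.2 _).trans (mem_toggle_of_ne h.1)

lemma notMem_sweep_append_cons {n i k : ℕ} {l₁ l₂ : List ℕ} {S : Finset ℕ} (hk : k ∈ S)
    (hkl₁ : k ∉ l₁) (hki : k = i ∨ k = i + 1 ∨ k + 1 = i) (hil₂ : i ∉ l₂) :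
    i ∉ sweep n (l₁ ++ i :: l₂) S := by
  have hsplit : sweep n (l₁ ++ i :: l₂) S = sweep n l₂ (toggle n i (sweep n l₁ S)) := by
    simp [sweep]
  rw [hsplit, mem_sweep_of_notMem hil₂]
  exact notMem_toggle_of_mem ((mem_sweep_of_notMem hkl₁ S).2 hk) hki

lemma notMem_sweep_of_pairwise_lt {n i k : ℕ} {l : List ℕ} {S : Finset ℕ}
    (hl : l.Pairwise (· < ·)) (hi : i ∈ l) (hk : k ∈ S) (hki : k = i ∨ k = i + 1) :
    i ∉ sweep n l S := by
  obtain ⟨l₁, l₂, rfl⟩ := List.append_of_mem hi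
  simp only [List.pairwise_append, List.pairwise_cons, List.mem_cons] at hl
  exact notMem_sweep_append_cons hk (fun h => by have := hl.2.2 k h i (.inl rfl); omega)
    (by omega) (fun h => (hl.2.1.1 i h).false)

lemma notMem_sweep_of_pairwise_gt {n i k : ℕ} {l : List ℕ} {S : Finset ℕ}
    (hl : l.Pairwise (· > ·)) (hi : i ∈ l) (hk : k ∈ S) (hki : k = i ∨ k + 1 = i) :
    i ∉ sweep n l S := by
  obtain ⟨l₁, l₂, rfl⟩ := List.append_of_mem hi
  simp only [List.pairwise_append, List.pairwise_cons, List.mem_cons] at hl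
  exact notMem_sweep_append_cons hk (fun h => by have := hl.2.2 k h i (.inl rfl); omega)
    (by omega) (fun h => (hl.2.1.1 i h).false)

def vertices (n : ℕ) : List ℕ := (List.range n).map (· + 1)

lemma mem_vertices {n i : ℕ} : i ∈ vertices n ↔ 1 ≤ i ∧ i ≤ n := by
  simp only [vertices, List.mem_map, List.mem_range]
  constructor
  · rintro ⟨k, hk, rfl⟩; omega
  · intro h; exact ⟨i - 1, by omega, by omega⟩

lemma pairwise_lt_vertices (n : ℕ) : (vertices n).Pairwise (· < ·) :=
  List.pairwise_map.2 ((List.pairwise_lt_range).imp fun h => by omega)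

lemma phi_eq_sweep (n : ℕ) (S : Finset ℕ) : phi n S = sweep n (vertices n) S := by
  simp [phi, sweep, vertices, List.foldl_map]

lemma phiInv_eq_sweep (n : ℕ) (S : Finset ℕ) :
    phiInv n S = sweep n (vertices n).reverse S := by
  simp [phiInv, sweep, vertices, List.foldl_reverse, List.foldr_map]

theorem stmt9_general (n : ℕ) (S : Finset ℕ)
    (j : ℕ) (hj1 : 1 ≤ j) (hjn : j ≤ n) (hjS : j ∈ S) :
    (j ∉ phi n S ∧ j ∉ phiInv n S)
    ∧ (2 ≤ j → j - 1 ∉ phi n S)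
    ∧ (j ≤ n - 1 → j + 1 ∉ phiInv n S) := by
  have hup := pairwise_lt_vertices n
  have hdown : (vertices n).reverse.Pairwise (· > ·) := List.pairwise_reverse.2 hup
  rw [phi_eq_sweep, phiInv_eq_sweep]
  refine ⟨⟨?_, ?_⟩, fun hj2 => ?_, fun hj => ?_⟩
  · exact notMem_sweep_of_pairwise_lt hup (mem_vertices.2 ⟨hj1, hjn⟩) hjS (.inl rfl)
  · exact notMem_sweep_of_pairwise_gt hdown
      (List.mem_reverse.2 (mem_vertices.2 ⟨hj1, hjn⟩)) hjS (.inl rfl)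
  · exact notMem_sweep_of_pairwise_lt hup (mem_vertices.2 ⟨by omega, by omega⟩) hjS
      (.inr (by omega))
  · exact notMem_sweep_of_pairwise_gt hdown
      (List.mem_reverse.2 (mem_vertices.2 ⟨by omega, by omega⟩)) hjS (.inr rfl)

/-- If `j ∈ S` then: (1) `j ∉ φ(S)` and `j ∉ φ⁻¹(S)`;
(2) if `j ≥ 2` then `j−1 ∉ φ(S)`, and if `j ≤ n−1` then `j+1 ∉ φ⁻¹(S)`. -/
theorem stmt9 (n : ℕ) (hn : 2 ≤ n) (S : Finset ℕ) (hS : IndepSet n S)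
    (j : ℕ) (hj1 : 1 ≤ j) (hjn : j ≤ n) (hjS : j ∈ S) :
    (j ∉ phi n S ∧ j ∉ phiInv n S)
    ∧ (2 ≤ j → j - 1 ∉ phi n S)
    ∧ (j ≤ n - 1 → j + 1 ∉ phiInv n S) :=
  stmt9_general n S j hj1 hjn hjS
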